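/- Let H be a real Hilbert space and let X ⊆ H be a subset of n points. Then there exists a map f : H → ℝ^{n+1} (Euclidean space with the standard norm) such that (i) for every x ∈ X and every c ∈ H, ‖x − c‖ = ‖f(x) − f(c)‖, and (ii) for all x, y ∈ X, ⟨f(x), f(y)⟩ = ⟨x, y⟩, where the left-hand inner product is the standard Euclidean inner product on ℝ^{n+1}. -/

import Mathlib

open scoped RealInnerProductSpace

/-- A finite-dimensional real inner product space of rank at most `k` embeds
isometrically into `EuclideanSpace ℝ (Fin k)`. -/
theorem aux_embed {E : Type*} [NormedAddCommGroup E] [InnerProductSpace ℝ E]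
    [FiniteDimensional ℝ E]
    (k : ℕ) (h : Module.finrank ℝ E ≤ k) : Nonempty (E →ₗᵢ[ℝ] EuclideanSpace ℝ (Fin k)) := by
  set m := Module.finrank ℝ E
  let b := stdOrthonormalBasis ℝ E
  let v : Fin m → EuclideanSpace ℝ (Fin k) := fun j => EuclideanSpace.single (Fin.castLE h j) 1
  have hv : Orthonormal ℝ v := by
    have := (EuclideanSpace.basisFun (Fin k) ℝ).orthonormal.comp (Fin.castLE h)
      (Fin.castLE_injective h)
    have e : v = ⇑(EuclideanSpace.basisFun (Fin k) ℝ) ∘ Fin.castLE h := by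
      funext j
      ext i
      simp [v, EuclideanSpace.basisFun_apply]
    rw [e]; exact this
  let L : E →ₗ[ℝ] EuclideanSpace ℝ (Fin k) := b.toBasis.constr ℝ v
  have hLb : L ∘ b = v := by
    funext j
    simp only [Function.comp_apply, L, ← b.coe_toBasis]
    exact b.toBasis.constr_basis ℝ v j
  have hf : Orthonormal ℝ (L ∘ ⇑b.toBasis) := by
    rw [b.coe_toBasis, hLb]; exact hv
  exact ⟨L.isometryOfOrthonormal b.orthonormal hf⟩

/-- Let `H` be a real Hilbert space and `X ⊆ H` a subset of `n` points. Then there is a map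
`f : H → ℝ^{n+1}` such that (i) for every `x ∈ X` and every `c ∈ H`, `‖x − c‖ = ‖f x − f c‖`,
and (ii) for all `x, y ∈ X`, `⟨f x, f y⟩ = ⟨x, y⟩`. -/
theorem stmt3 {H : Type*} [NormedAddCommGroup H] [InnerProductSpace ℝ H] [CompleteSpace H]
    (n : ℕ) (X : Finset H) (hX : X.card = n) :
    ∃ f : H → EuclideanSpace ℝ (Fin (n + 1)),
      (∀ x ∈ X, ∀ c : H, ‖x - c‖ = ‖f x - f c‖) ∧
      (∀ x ∈ X, ∀ y ∈ X, ⟪f x, f y⟫ = ⟪x, y⟫) := by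
  classical
  set V : Submodule ℝ H := Submodule.span ℝ (X : Set H) with hV
  haveI : FiniteDimensional ℝ V := inferInstance
  have hVrank : Module.finrank ℝ V ≤ n := by
    simpa [hX, Set.finrank] using finrank_span_finset_le_card (R := ℝ) X
  -- the target of the first stage: V × ℝ with the L2 norm
  let E := WithLp 2 (V × ℝ)
  haveI : FiniteDimensional ℝ E := (WithLp.linearEquiv 2 ℝ (V × ℝ)).symm.finiteDimensional
  have hErank : Module.finrank ℝ E ≤ n + 1 := by
    have h1 : Module.finrank ℝ E = Module.finrank ℝ (V × ℝ) :=
      (WithLp.linearEquiv 2 ℝ (V × ℝ)).finrank_eq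
    rw [h1, Module.finrank_prod]
    simpa using Nat.add_le_add hVrank (le_refl 1)
  obtain ⟨J⟩ := aux_embed (n + 1) hErank
  let P := V.orthogonalProjectionOnto
  let g : H → E := fun c => (WithLp.equiv 2 (V × ℝ)).symm (P c, ‖c - (P c : H)‖)
  refine ⟨fun c => J (g c), ?_, ?_⟩
  · intro x hx c
    have hxV : x ∈ V := Submodule.subset_span hx
    have hPx : ((P x : V) : H) = x := Submodule.starProjection_eq_self_iff.2 hxV
    -- Pythagoras: ‖x - c‖² = ‖x - P c‖² + ‖c - P c‖²
    have horth : ⟪(x : H) - (P c : H), (P c : H) - c⟫ = 0 := by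
      have h1 : (x : H) - (P c : H) ∈ V := sub_mem hxV (P c).2
      have h2 : c - (P c : H) ∈ Vᗮ := Submodule.sub_starProjection_mem_orthogonal c
      have h3 : ⟪(x : H) - (P c : H), c - (P c : H)⟫ = 0 :=
        Submodule.inner_right_of_mem_orthogonal h1 h2
      rw [← neg_sub c (P c : H), inner_neg_right, h3, neg_zero]
    have key : ‖x - c‖ ^ 2 = ‖(x : H) - (P c : H)‖ ^ 2 + ‖c - (P c : H)‖ ^ 2 := by
      have hsplit : x - c = ((x : H) - (P c : H)) + ((P c : H) - c) := by abel
      rw [hsplit, norm_add_sq_real, horth, norm_sub_rev (P c : H) c]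
      ring
    have hJ : ‖J (g x) - J (g c)‖ = ‖g x - g c‖ := by
      rw [← J.map_sub, J.norm_map]
    have hgnorm : ‖g x - g c‖ ^ 2 = ‖(x : H) - (P c : H)‖ ^ 2 + ‖c - (P c : H)‖ ^ 2 := by
      have hgx : g x - g c =
          (WithLp.equiv 2 (V × ℝ)).symm (P x - P c, ‖x - (P x : H)‖ - ‖c - (P c : H)‖) := by
        rfl
      have hx0 : ‖x - (P x : H)‖ = 0 := by
        rw [hPx]; simp
      rw [hgx, hx0]
      have hsq := WithLp.prod_norm_sq_eq_of_L2
        ((WithLp.equiv 2 (V × ℝ)).symm (P x - P c, (0 : ℝ) - ‖c - (P c : H)‖))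
      rw [hsq]
      have hsub : ((P x - P c : V) : H) = (x : H) - (P c : H) := by
        push_cast
        rw [hPx]
      have hnn : ‖(P x - P c : V)‖ = ‖(x : H) - (P c : H)‖ := by
        rw [← hsub]; rfl
      simp only [WithLp.equiv_symm_apply, WithLp.toLp_fst, WithLp.toLp_snd,
        WithLp.ofLp_toLp]
      rw [hnn]
      rw [Real.norm_eq_abs, sq_abs]
      ring
    have h1 : ‖x - c‖ ^ 2 = ‖J (g x) - J (g c)‖ ^ 2 := by rw [key, hJ, hgnorm]
    have h2 := congrArg Real.sqrt h1
    rwa [Real.sqrt_sq (norm_nonneg _), Real.sqrt_sq (norm_nonneg _)] at h2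
  · intro x hx y hy
    have hxV : x ∈ V := Submodule.subset_span hx
    have hyV : y ∈ V := Submodule.subset_span hy
    have hPx : ((P x : V) : H) = x := Submodule.starProjection_eq_self_iff.2 hxV
    have hPy : ((P y : V) : H) = y := Submodule.starProjection_eq_self_iff.2 hyV
    rw [J.inner_map_map]
    have := WithLp.prod_inner_apply (𝕜 := ℝ) (g x) (g y)
    rw [this]
    have hx0 : ‖x - (P x : H)‖ = 0 := by rw [hPx]; simp
    have hy0 : ‖y - (P y : H)‖ = 0 := by rw [hPy]; simp
    simp only [g, WithLp.equiv_symm_apply, WithLp.toLp_fst, WithLp.toLp_snd,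
        WithLp.ofLp_toLp]
    rw [hx0, hy0]
    rw [Submodule.coe_inner, hPx, hPy]
    simp
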